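/- arXiv:math/0106008 — 2 statements merged into one kernel-verified Lean document; each statement's English description precedes it below -/
import Mathlib

section
/- Let n ≥ 0 be an integer, 1 < p < ∞, and ε > 0. The integral operator on L^p((0,∞), t^{(n+1)p/2-1} dt) with kernel k(t,s) = χ_{[0,1]}(t) · t^{-(n+1)/2+ε} s^{-(n+1)/2-ε} for s > t and 0 for s ≤ t (acting by (Gu)(t) = ∫₀^∞ k(t,s) u(s) s^n ds) is bounded with operator norm at most 1/ε. -/
open MeasureTheory Set ENNReal

/-!
With `c = (n + 1) / 2` and `g s = u s * s ^ ((n - 1) / 2 - ε)`, the operator is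
`t ^ (ε - c) ∫_t^∞ g`. Absorbing `t ^ ((ε - c) p)` into the weight `t ^ (c p - 1)` and enlarging
`(0, 1]` to `(0, ∞)`, the claim becomes Hardy's second inequality
`∫₀^∞ (∫_t^∞ g) ^ p t ^ (ε p - 1) dt ≤ ε ^ (-p) ∫₀^∞ g ^ p s ^ (p + ε p - 1) ds`,
whose right-hand weight turns back into `s ^ (c p - 1)` when `g` is expressed through `u`.
Hardy's inequality follows from Hölder's inequality against `s ^ b` and `s ^ (-b)`,
`b = (1 + ε) (p - 1) / p`, which bounds `(∫_t^∞ g) ^ p` by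
`(t ^ (-ε) / ε) ^ (p - 1) ∫_t^∞ g ^ p s ^ ((1 + ε) (p - 1))`, followed by Tonelli's theorem on
the region `0 < t < s`.
-/

lemma ofReal_rpow_mul_ofReal_rpow {t : ℝ} (ht : 0 < t) (a b : ℝ) :
    ENNReal.ofReal (t ^ a) * ENNReal.ofReal (t ^ b) = ENNReal.ofReal (t ^ (a + b)) := by
  rw [← ENNReal.ofReal_mul (Real.rpow_nonneg ht.le a), Real.rpow_add ht]

lemma ofReal_rpow_rpow {t : ℝ} (ht : 0 < t) (a p : ℝ) :
    ENNReal.ofReal (t ^ a) ^ p = ENNReal.ofReal (t ^ (a * p)) := by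
  rw [ENNReal.ofReal_rpow_of_pos (Real.rpow_pos_of_pos ht a), Real.rpow_mul ht.le]

lemma lintegral_Ioi_ofReal_rpow {a t : ℝ} (ha : a < -1) (ht : 0 < t) :
    ∫⁻ s in Ioi t, ENNReal.ofReal (s ^ a) = ENNReal.ofReal (-t ^ (a + 1) / (a + 1)) := by
  rw [← ofReal_integral_eq_lintegral_ofReal (integrableOn_Ioi_rpow_of_lt ha ht)
      ((ae_restrict_iff' measurableSet_Ioi).2 (ae_of_all _ fun s hs =>
        Real.rpow_nonneg (ht.trans hs).le a)),
    integral_Ioi_rpow_of_lt ha ht]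

lemma lintegral_Ioo_zero_ofReal_rpow {a s : ℝ} (ha : -1 < a) (hs : 0 < s) :
    ∫⁻ t in Ioo 0 s, ENNReal.ofReal (t ^ a) = ENNReal.ofReal (s ^ (a + 1) / (a + 1)) := by
  have hint : IntegrableOn (fun t : ℝ => t ^ a) (Ioc 0 s) :=
    (intervalIntegrable_iff_integrableOn_Ioc_of_le hs.le).1
      (intervalIntegral.intervalIntegrable_rpow' ha)
  rw [Measure.restrict_congr_set Ioo_ae_eq_Ioc,
    ← ofReal_integral_eq_lintegral_ofReal hint
      ((ae_restrict_iff' measurableSet_Ioc).2 (ae_of_all _ fun t ht =>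
        Real.rpow_nonneg ht.1.le a)),
    ← intervalIntegral.integral_of_le hs.le, integral_rpow (Or.inl ha),
    Real.zero_rpow (by linarith), sub_zero]

lemma lintegral_Ioi_mul_lintegral_Ioi {a : ℝ} {f h : ℝ → ℝ≥0∞} (hf : Measurable f)
    (hh : Measurable h) :
    ∫⁻ t in Ioi a, f t * ∫⁻ s in Ioi t, h s = ∫⁻ s in Ioi a, h s * ∫⁻ t in Ioo a s, f t := by
  have hmeas : Measurable (Function.uncurry fun t s : ℝ => f t * (Ioi t).indicator h s) := by
    have : (Function.uncurry fun t s : ℝ => f t * (Ioi t).indicator h s) =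
        fun z : ℝ × ℝ => if z.1 < z.2 then f z.1 * h z.2 else 0 := by
      funext ⟨t, s⟩
      by_cases hts : t < s <;> simp [indicator_apply, hts]
    rw [this]
    exact Measurable.ite (measurableSet_lt measurable_fst measurable_snd)
      ((hf.comp measurable_fst).mul (hh.comp measurable_snd)) measurable_const
  calc ∫⁻ t in Ioi a, f t * ∫⁻ s in Ioi t, h s
      = ∫⁻ t in Ioi a, ∫⁻ s in Ioi a, f t * (Ioi t).indicator h s := by
        refine setLIntegral_congr_fun measurableSet_Ioi fun t ht => ?_
        rw [lintegral_const_mul _ (hh.indicator measurableSet_Ioi),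
          lintegral_indicator measurableSet_Ioi, Measure.restrict_restrict measurableSet_Ioi,
          Ioi_inter_Ioi, sup_of_le_left (le_of_lt ht)]
    _ = ∫⁻ s in Ioi a, ∫⁻ t in Ioi a, f t * (Ioi t).indicator h s :=
        lintegral_lintegral_swap hmeas.aemeasurable
    _ = ∫⁻ s in Ioi a, h s * ∫⁻ t in Ioo a s, f t := by
        refine setLIntegral_congr_fun measurableSet_Ioi fun s _ => ?_
        have hind : ∀ t,
            f t * (Ioi t).indicator h s = (Iio s).indicator (fun t => h s * f t) t := by
          intro t
          by_cases hts : t < s <;> simp [hts, mul_comm]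
        simp_rw [hind]
        rw [lintegral_indicator measurableSet_Iio, Measure.restrict_restrict measurableSet_Iio,
          Iio_inter_Ioi, lintegral_const_mul _ hf]

lemma lintegral_Ioi_rpow_le {p ε t : ℝ} (hp : 1 < p) (hε : 0 < ε) (ht : 0 < t)
    {g : ℝ → ℝ≥0∞} (hg : Measurable g) :
    (∫⁻ s in Ioi t, g s) ^ p ≤ ENNReal.ofReal ((t ^ (-ε) / ε) ^ (p - 1)) *
      ∫⁻ s in Ioi t, g s ^ p * ENNReal.ofReal (s ^ ((1 + ε) * (p - 1))) := by
  have hp0 : 0 < p := zero_lt_one.trans hp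
  set q := p.conjExponent
  have hpq : p.HolderConjugate q := .conjExponent hp
  set b := (1 + ε) / q
  have hbp : b * p = (1 + ε) * (p - 1) := by
    rw [← hpq.div_conj_eq_sub_one]; ring
  have hholder := ENNReal.lintegral_mul_le_Lp_mul_Lq (volume.restrict (Ioi t)) hpq
    (f := fun s => g s * ENNReal.ofReal (s ^ b)) (g := fun s => ENNReal.ofReal (s ^ (-b)))
    (by fun_prop) (by fun_prop)
  have hsplit : ∫⁻ s in Ioi t, g s =
      ∫⁻ s in Ioi t, g s * ENNReal.ofReal (s ^ b) * ENNReal.ofReal (s ^ (-b)) := by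
    refine setLIntegral_congr_fun measurableSet_Ioi fun s hs => ?_
    rw [mul_assoc, ofReal_rpow_mul_ofReal_rpow (ht.trans hs), add_neg_cancel, Real.rpow_zero,
      ENNReal.ofReal_one, mul_one]
  have hfirst : ∫⁻ s in Ioi t, (g s * ENNReal.ofReal (s ^ b)) ^ p =
      ∫⁻ s in Ioi t, g s ^ p * ENNReal.ofReal (s ^ ((1 + ε) * (p - 1))) := by
    refine setLIntegral_congr_fun measurableSet_Ioi fun s hs => ?_
    rw [ENNReal.mul_rpow_of_nonneg _ _ hp0.le, ofReal_rpow_rpow (ht.trans hs), hbp]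
  have hsecond :
      ∫⁻ s in Ioi t, ENNReal.ofReal (s ^ (-b)) ^ q = ENNReal.ofReal (t ^ (-ε) / ε) := by
    rw [setLIntegral_congr_fun measurableSet_Ioi fun s hs => ofReal_rpow_rpow (ht.trans hs) _ _,
      neg_mul, div_mul_cancel₀ _ hpq.symm.ne_zero, lintegral_Ioi_ofReal_rpow (by linarith) ht]
    ring_nf
  calc (∫⁻ s in Ioi t, g s) ^ p
      ≤ ((∫⁻ s in Ioi t, g s ^ p * ENNReal.ofReal (s ^ ((1 + ε) * (p - 1)))) ^ (1 / p) *
          ENNReal.ofReal (t ^ (-ε) / ε) ^ (1 / q)) ^ p := by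
        rw [hsplit, ← hfirst, ← hsecond]
        exact ENNReal.rpow_le_rpow hholder hp0.le
    _ = _ := by
        rw [ENNReal.mul_rpow_of_nonneg _ _ hp0.le, ← ENNReal.rpow_mul, ← ENNReal.rpow_mul,
          one_div_mul_cancel hp0.ne', ENNReal.rpow_one, one_div_mul_eq_div, hpq.div_conj_eq_sub_one,
          ENNReal.ofReal_rpow_of_nonneg (by positivity) (by linarith), mul_comm]

theorem lintegral_rpow_lintegral_Ioi_le {p ε : ℝ} (hp : 1 < p) (hε : 0 < ε) {g : ℝ → ℝ≥0∞}
    (hg : Measurable g) :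
    ∫⁻ t in Ioi (0 : ℝ), (∫⁻ s in Ioi t, g s) ^ p * ENNReal.ofReal (t ^ (ε * p - 1)) ≤
      ENNReal.ofReal ((1 / ε) ^ p) *
        ∫⁻ s in Ioi (0 : ℝ), g s ^ p * ENNReal.ofReal (s ^ (p + ε * p - 1)) := by
  have hweight : ∀ t : ℝ, 0 < t → (t ^ (-ε) / ε) ^ (p - 1) * t ^ (ε * p - 1) =
      ε ^ (1 - p) * t ^ (ε - 1) := by
    intro t ht
    rw [Real.div_rpow (by positivity) hε.le, ← Real.rpow_mul ht.le, div_mul_eq_mul_div,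
      ← Real.rpow_add ht, show 1 - p = -(p - 1) by ring, Real.rpow_neg hε.le, div_eq_inv_mul]
    ring_nf
  have hconst : ε ^ (1 - p) * ε⁻¹ = (1 / ε) ^ p := by
    rw [← Real.rpow_neg_one, ← Real.rpow_add hε, one_div, Real.inv_rpow hε.le,
      ← Real.rpow_neg hε.le]
    ring_nf
  calc ∫⁻ t in Ioi (0 : ℝ), (∫⁻ s in Ioi t, g s) ^ p * ENNReal.ofReal (t ^ (ε * p - 1))
      ≤ ∫⁻ t in Ioi (0 : ℝ), ENNReal.ofReal (ε ^ (1 - p)) * (ENNReal.ofReal (t ^ (ε - 1)) *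
          ∫⁻ s in Ioi t, g s ^ p * ENNReal.ofReal (s ^ ((1 + ε) * (p - 1)))) := by
        refine setLIntegral_mono' measurableSet_Ioi fun t (ht : 0 < t) => ?_
        calc _ ≤ ENNReal.ofReal ((t ^ (-ε) / ε) ^ (p - 1)) *
                (∫⁻ s in Ioi t, g s ^ p * ENNReal.ofReal (s ^ ((1 + ε) * (p - 1)))) *
                ENNReal.ofReal (t ^ (ε * p - 1)) := by
              gcongr
              exact lintegral_Ioi_rpow_le hp hε ht hg
          _ = _ := by
              rw [mul_right_comm, ← ENNReal.ofReal_mul (by positivity), hweight t ht,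
                ENNReal.ofReal_mul (by positivity), mul_assoc]
    _ = ENNReal.ofReal (ε ^ (1 - p)) * ∫⁻ s in Ioi (0 : ℝ),
          g s ^ p * ENNReal.ofReal (s ^ ((1 + ε) * (p - 1))) *
            ∫⁻ t in Ioo 0 s, ENNReal.ofReal (t ^ (ε - 1)) := by
        rw [lintegral_const_mul' _ _ ofReal_ne_top, lintegral_Ioi_mul_lintegral_Ioi (by fun_prop)
          (by fun_prop)]
    _ = ENNReal.ofReal (ε ^ (1 - p)) * ∫⁻ s in Ioi (0 : ℝ),
          ENNReal.ofReal ε⁻¹ * (g s ^ p * ENNReal.ofReal (s ^ (p + ε * p - 1))) := by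
        congr 1
        refine setLIntegral_congr_fun measurableSet_Ioi fun s (hs : 0 < s) => ?_
        rw [lintegral_Ioo_zero_ofReal_rpow (by linarith) hs, sub_add_cancel, div_eq_mul_inv,
          ENNReal.ofReal_mul (by positivity), show p + ε * p - 1 = (1 + ε) * (p - 1) + ε by ring,
          ← ofReal_rpow_mul_ofReal_rpow hs]
        ring
    _ = _ := by
        rw [lintegral_const_mul _ (by fun_prop), ← mul_assoc, ← ENNReal.ofReal_mul (by positivity),
          hconst]

lemma lintegral_Ioi_power_kernel {t : ℝ} (ht : 0 < t) (a b m : ℝ) (u : ℝ → ℝ≥0∞) :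
    ∫⁻ s in Ioi t, ENNReal.ofReal (t ^ a * s ^ b) * u s * ENNReal.ofReal (s ^ m) =
      ENNReal.ofReal (t ^ a) * ∫⁻ s in Ioi t, u s * ENNReal.ofReal (s ^ (b + m)) := by
  rw [← lintegral_const_mul' _ _ ofReal_ne_top]
  refine setLIntegral_congr_fun measurableSet_Ioi fun s hs => ?_
  rw [← ofReal_rpow_mul_ofReal_rpow (ht.trans hs), ENNReal.ofReal_mul (by positivity)]
  ring

/-- The integral operator on `L^p((0,∞), t^{(n+1)p/2-1} dt)` with kernel
`k(t,s) = χ_{[0,1]}(t) t^{-(n+1)/2+ε} s^{-(n+1)/2-ε}` for `s > t` (and `0` for `s ≤ t`),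
acting by `(Gu)(t) = ∫₀^∞ k(t,s) u(s) s^n ds`, is bounded with operator norm at most `1/ε`.
Since the kernel vanishes for `t > 1`, the outer integral is taken over `(0,1]`. -/
theorem kernel_case_two_bounded (n : ℕ) (p ε : ℝ) (hp : 1 < p) (hε : 0 < ε)
    (u : ℝ → ℝ≥0∞) (hu : Measurable u) :
    ∫⁻ t in Ioc (0:ℝ) 1,
        (∫⁻ s in Ioi t,
            ENNReal.ofReal (t ^ (-((n:ℝ)+1)/2 + ε) * s ^ (-((n:ℝ)+1)/2 - ε)) * u s *
              ENNReal.ofReal (s ^ (n:ℝ))) ^ p *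
          ENNReal.ofReal (t ^ (((n:ℝ)+1)*p/2 - 1)) ≤
      ENNReal.ofReal ((1/ε) ^ p) *
        ∫⁻ t in Ioi (0:ℝ), (u t) ^ p * ENNReal.ofReal (t ^ (((n:ℝ)+1)*p/2 - 1)) := by
  set g : ℝ → ℝ≥0∞ := fun s => u s * ENNReal.ofReal (s ^ (-((n:ℝ)+1)/2 - ε + n))
  have hp0 : 0 ≤ p := by linarith
  calc _ = ∫⁻ t in Ioc (0:ℝ) 1, (∫⁻ s in Ioi t, g s) ^ p * ENNReal.ofReal (t ^ (ε * p - 1)) := by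
        refine setLIntegral_congr_fun measurableSet_Ioc fun t ht => ?_
        rw [lintegral_Ioi_power_kernel ht.1, ENNReal.mul_rpow_of_nonneg _ _ hp0,
          ofReal_rpow_rpow ht.1, mul_comm (ENNReal.ofReal _), mul_assoc,
          ofReal_rpow_mul_ofReal_rpow ht.1]
        congr 3
        ring
    _ ≤ ∫⁻ t in Ioi (0:ℝ), (∫⁻ s in Ioi t, g s) ^ p * ENNReal.ofReal (t ^ (ε * p - 1)) :=
        lintegral_mono_set Ioc_subset_Ioi_self
    _ ≤ ENNReal.ofReal ((1 / ε) ^ p) *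
          ∫⁻ s in Ioi (0:ℝ), g s ^ p * ENNReal.ofReal (s ^ (p + ε * p - 1)) :=
        lintegral_rpow_lintegral_Ioi_le hp hε (by fun_prop)
    _ = _ := by
        congr 1
        refine setLIntegral_congr_fun measurableSet_Ioi fun s hs => ?_
        rw [ENNReal.mul_rpow_of_nonneg _ _ hp0, ofReal_rpow_rpow hs, mul_assoc,
          ofReal_rpow_mul_ofReal_rpow hs]
        ring_nf
end

section
/- Let μ > 0, δ > 0, 0 < θ < π, and k ≥ 0. Suppose b̃(τ, λ) is continuous on ℝ × Λ(δ,θ) with |b̃(τ,λ)| ≤ C (1 + τ² + |λ|^{2/μ})^{(−μ−1−k)/2}. For Re z < 0 and 0 < t ≤ 1 define b_z(t,τ) = t^μ ∫_𝒞 λ^z b̃(τ, t^μ λ) dλ, where 𝒞 is the boundary of Λ(δ,θ). Then |b_z(t,τ)| ≤ C' e^{θ|Im z|} (1+τ²)^{−k/2} uniformly for 0 < t ≤ 1, τ ∈ ℝ, and −1 ≤ Re z < 0. -/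
/-! On the contour `γ = keyholeContour δ θ` one has `‖γ u‖ ≥ δ`, `|arg γ u| ≤ θ` and
`‖γ'‖ ≤ max 1 δ`, so `‖(γ u) ^ z‖ ≤ δ ^ Re z · e^{θ |Im z|} ≤ max 1 δ⁻¹ · e^{θ |Im z|}`.
The weight splits as `(1 + τ² + s^{2/μ})^{(-μ-1-k)/2} ≤ (1 + τ²)^{-k/2} · (max 1 s)^{-(1+1/μ)}`,
and since `‖γ u‖ ≥ κ |u|` with `κ = δ / (δ + θ)`, the integrand is dominated by a multiple of
`φ (t^μ κ u)` with `φ y = (max 1 |y|)^{-(1+1/μ)}` integrable. The substitution `ρ = t^μ κ u`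
then yields a factor `t^{-μ}` which cancels the prefactor `t^μ`. -/

open MeasureTheory Set Complex

/-- The keyhole region `Λ(δ,θ)`. -/
def keyhole (δ θ : ℝ) : Set ℂ := {l : ℂ | ‖l‖ ≤ δ ∨ θ ≤ |Complex.arg l|}

/-- The parametrized boundary of the keyhole `Λ(δ,θ)`, oriented with `Λ` to the left. -/
noncomputable def keyholeContour (δ θ : ℝ) : ℝ → ℂ := fun u =>
  if u ≤ -θ then ((δ - (u + θ) : ℝ) : ℂ) * Complex.exp (θ * Complex.I)
  else if u ≤ θ then ((δ : ℝ) : ℂ) * Complex.exp (-(u : ℂ) * Complex.I)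
  else ((δ + (u - θ) : ℝ) : ℂ) * Complex.exp (-(θ : ℂ) * Complex.I)

lemma integrable_max_one_abs_rpow_neg {p : ℝ} (hp : 1 < p) :
    Integrable fun y : ℝ => (max 1 |y|) ^ (-p) := by
  have hmax (y : ℝ) : 0 < max 1 |y| := lt_max_of_lt_left one_pos
  refine ((integrable_one_add_norm (E := ℝ) (μ := volume) (r := p) (by simpa using hp)).const_mul
    (2 ^ p)).mono' ?_ (Filter.Eventually.of_forall fun y => ?_)
  · exact ((continuous_const.max continuous_abs).rpow_const
      fun y => Or.inl (hmax y).ne').aestronglyMeasurable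
  rw [Real.norm_of_nonneg (Real.rpow_nonneg (hmax y).le _), Real.norm_eq_abs]
  calc max 1 |y| ^ (-p) = 2 ^ p * (2 * max 1 |y|) ^ (-p) := by
        rw [Real.mul_rpow zero_le_two (hmax y).le, ← mul_assoc, ← Real.rpow_add two_pos,
          add_neg_cancel, Real.rpow_zero, one_mul]
    _ ≤ 2 ^ p * (1 + |y|) ^ (-p) := by
        refine mul_le_mul_of_nonneg_left (Real.rpow_le_rpow_of_nonpos (by positivity) ?_
          (by linarith)) (by positivity)
        linarith [le_max_left 1 |y|, le_max_right 1 |y|]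

lemma norm_integral_le_of_le_comp_mul {f : ℝ → ℂ} {φ : ℝ → ℝ} (hφ : Integrable φ) {K c : ℝ}
    (hc : 0 < c) (hf : ∀ᵐ u, ‖f u‖ ≤ K * φ (c * u)) :
    ‖∫ u, f u‖ ≤ K * c⁻¹ * ∫ y, φ y := by
  refine (norm_integral_le_of_norm_le ((hφ.comp_mul_left' hc.ne').const_mul K) hf).trans_eq ?_
  rw [integral_const_mul, Measure.integral_comp_mul_left, smul_eq_mul,
    abs_of_pos (inv_pos.2 hc), mul_assoc]

lemma ae_abs_ne (a : ℝ) : ∀ᵐ u : ℝ, |u| ≠ a := by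
  have hnull : volume ({-a, a} : Set ℝ) = 0 := ((finite_singleton a).insert (-a)).measure_zero _
  filter_upwards [compl_mem_ae_iff.2 hnull] with u hu hua
  exact hu (by rcases eq_or_eq_neg_of_abs_eq hua with h | h <;> simp [h])

lemma norm_cpow_le_of_le_norm {w z : ℂ} {δ θ : ℝ} (hδ : 0 < δ) (hw : δ ≤ ‖w‖)
    (harg : |arg w| ≤ θ) (hz : z.re ≤ 0) :
    ‖w ^ z‖ ≤ δ ^ z.re * Real.exp (θ * |z.im|) := by
  have hexp : -(arg w * z.im) ≤ θ * |z.im| :=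
    calc -(arg w * z.im) ≤ |arg w| * |z.im| := (neg_le_abs _).trans_eq (abs_mul _ _)
      _ ≤ θ * |z.im| := by gcongr
  refine (norm_cpow_le w z).trans ?_
  rw [div_eq_mul_inv, ← Real.exp_neg]
  exact mul_le_mul (Real.rpow_le_rpow_of_nonpos hδ hw hz) (Real.exp_le_exp.2 hexp)
    (Real.exp_pos _).le (Real.rpow_nonneg hδ.le _)

lemma rpow_le_max_one_inv {δ x : ℝ} (hδ : 0 < δ) (hx1 : -1 ≤ x) (hx0 : x ≤ 0) :
    δ ^ x ≤ max 1 δ⁻¹ := by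
  rcases le_or_gt 1 δ with h | h
  · exact le_max_of_le_left (Real.rpow_le_one_of_one_le_of_nonpos h hx0)
  · refine le_max_of_le_right ?_
    simpa [Real.rpow_neg_one] using Real.rpow_le_rpow_of_exponent_ge hδ h.le hx1

lemma rpow_one_add_sq_add_le {μ k : ℝ} (hμ : 0 < μ) (hk : 0 ≤ k) (τ : ℝ) {s : ℝ} (hs : 0 ≤ s) :
    (1 + τ ^ 2 + s ^ (2 / μ)) ^ ((-μ - 1 - k) / 2) ≤
      (1 + τ ^ 2) ^ (-k / 2) * (max 1 s) ^ (-(1 + 1 / μ)) := by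
  set X := 1 + τ ^ 2 + s ^ (2 / μ)
  have hτ : 1 ≤ 1 + τ ^ 2 := by nlinarith
  have hsμ : 0 ≤ s ^ (2 / μ) := Real.rpow_nonneg hs _
  have hsX : (max 1 s) ^ (2 / μ) ≤ X := by
    rcases le_total 1 s with h | h
    · rw [max_eq_right h]; linarith
    · rw [max_eq_left h, Real.one_rpow]; linarith
  have hmax : 0 < max 1 s := lt_max_of_lt_left one_pos
  have hX : 0 < X := by positivity
  have hexp : (-μ - 1 - k) / 2 = -k / 2 + -((μ + 1) / 2) := by ring
  rw [hexp, Real.rpow_add hX]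
  refine mul_le_mul (Real.rpow_le_rpow_of_nonpos (by positivity) (by linarith)
    (by linarith)) ?_ (by positivity) (by positivity)
  calc X ^ (-((μ + 1) / 2)) ≤ ((max 1 s) ^ (2 / μ)) ^ (-((μ + 1) / 2)) :=
        Real.rpow_le_rpow_of_nonpos (by positivity) hsX (by linarith)
    _ = (max 1 s) ^ (-(1 + 1 / μ)) := by
        rw [← Real.rpow_mul hmax.le]; congr 1; field_simp

lemma keyholeContour_eq_polar {δ θ : ℝ} (hθ : 0 < θ) (u : ℝ) :
    ∃ φ : ℝ, |φ| ≤ θ ∧ (θ < |u| → |φ| = θ) ∧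
      keyholeContour δ θ u = ((δ + max 0 (|u| - θ) : ℝ) : ℂ) * exp (φ * I) := by
  unfold keyholeContour
  rcases le_or_gt u (-θ) with h | h
  · refine ⟨θ, (abs_of_pos hθ).le, fun _ => abs_of_pos hθ, ?_⟩
    rw [if_pos h, abs_of_nonpos (by linarith), max_eq_right (by linarith)]
    push_cast; ring
  rcases le_or_gt u θ with h' | h'
  · have hu : |u| ≤ θ := abs_le.2 ⟨h.le, h'⟩
    refine ⟨-u, by rwa [abs_neg], fun hc => absurd hc hu.not_gt, ?_⟩
    rw [if_neg h.not_ge, if_pos h', max_eq_left (by linarith)]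
    push_cast; ring_nf
  · refine ⟨-θ, by rw [abs_neg, abs_of_pos hθ], fun _ => by rw [abs_neg, abs_of_pos hθ], ?_⟩
    rw [if_neg (by linarith), if_neg h'.not_ge, abs_of_pos (by linarith),
      max_eq_right (by linarith)]
    push_cast; ring_nf

lemma norm_keyholeContour {δ θ : ℝ} (hδ : 0 < δ) (hθ : 0 < θ) (u : ℝ) :
    ‖keyholeContour δ θ u‖ = δ + max 0 (|u| - θ) := by
  obtain ⟨φ, -, -, h⟩ := keyholeContour_eq_polar (δ := δ) hθ u
  rw [h, norm_mul, norm_exp_ofReal_mul_I, mul_one, norm_real, Real.norm_of_nonneg (by positivity)]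

lemma abs_arg_keyholeContour {δ θ : ℝ} (hδ : 0 < δ) (hθ : 0 < θ) (hθπ : θ < Real.pi) (u : ℝ) :
    |arg (keyholeContour δ θ u)| ≤ θ ∧ (θ < |u| → |arg (keyholeContour δ θ u)| = θ) := by
  obtain ⟨φ, hφ, hφu, h⟩ := keyholeContour_eq_polar (δ := δ) hθ u
  have hφπ : φ ∈ Ioc (-Real.pi) Real.pi := by
    constructor <;> linarith [abs_le.1 hφ]
  rw [h, exp_mul_I, arg_real_mul _ (by positivity), arg_cos_add_sin_mul_I hφπ]
  exact ⟨hφ, hφu⟩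

lemma ofReal_mul_keyholeContour_mem_keyhole {δ θ : ℝ} (hδ : 0 < δ) (hθ : 0 < θ)
    (hθπ : θ < Real.pi) {c : ℝ} (hc : 0 < c) (hc1 : c ≤ 1) (u : ℝ) :
    (c : ℂ) * keyholeContour δ θ u ∈ keyhole δ θ := by
  rcases le_or_gt |u| θ with h | h
  · left
    rw [norm_mul, norm_real, Real.norm_of_nonneg hc.le, norm_keyholeContour hδ hθ,
      max_eq_left (by linarith), add_zero]
    exact mul_le_of_le_one_left hδ.le hc1
  · right
    rw [arg_real_mul _ hc, ((abs_arg_keyholeContour hδ hθ hθπ u).2 h)]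

lemma mul_abs_le_norm_keyholeContour {δ θ : ℝ} (hδ : 0 < δ) (hθ : 0 < θ) (u : ℝ) :
    δ / (δ + θ) * |u| ≤ ‖keyholeContour δ θ u‖ := by
  rw [norm_keyholeContour hδ hθ, div_mul_eq_mul_div, div_le_iff₀ (by positivity)]
  rcases le_total |u| θ with h | h
  · rw [max_eq_left (by linarith)]; nlinarith
  · rw [max_eq_right (by linarith)]; nlinarith

lemma deriv_keyholeContour_of_lt_neg {δ θ u : ℝ} (hu : u < -θ) :
    deriv (keyholeContour δ θ) u = -exp (θ * I) := by
  have heq : keyholeContour δ θ =ᶠ[nhds u] fun v : ℝ => ((δ - (v + θ) : ℝ) : ℂ) * exp (θ * I) := by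
    filter_upwards [Iio_mem_nhds hu] with v hv
    simp only [keyholeContour, if_pos (mem_Iio.1 hv).le]
  rw [heq.deriv_eq]
  have hline : HasDerivAt (fun v : ℝ => (δ - (v + θ) : ℝ)) (-1) u := by
    simpa using ((hasDerivAt_id u).add_const θ).const_sub δ
  simpa using (hline.ofReal_comp.mul_const (exp (θ * I))).deriv

lemma deriv_keyholeContour_of_abs_lt {δ θ u : ℝ} (hu : |u| < θ) :
    deriv (keyholeContour δ θ) u = -I * keyholeContour δ θ u := by
  obtain ⟨hu₁, hu₂⟩ := abs_lt.1 hu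
  have heq : keyholeContour δ θ =ᶠ[nhds u] fun v : ℝ => (δ : ℂ) * exp (-(v : ℂ) * I) := by
    filter_upwards [Ioo_mem_nhds hu₁ hu₂] with v hv
    simp only [keyholeContour, if_neg hv.1.not_ge, if_pos hv.2.le]
  rw [heq.deriv_eq, heq.eq_of_nhds]
  have hphase : HasDerivAt (fun v : ℝ => -(v : ℂ) * I) (-I) u := by
    simpa using (hasDerivAt_id u).ofReal_comp.neg.mul_const I
  rw [(hphase.cexp.const_mul (δ : ℂ)).deriv]
  ring

lemma deriv_keyholeContour_of_gt {δ θ u : ℝ} (hθ : 0 ≤ θ) (hu : θ < u) :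
    deriv (keyholeContour δ θ) u = exp (-(θ : ℂ) * I) := by
  have heq : keyholeContour δ θ =ᶠ[nhds u]
      fun v : ℝ => ((δ + (v - θ) : ℝ) : ℂ) * exp (-(θ : ℂ) * I) := by
    filter_upwards [Ioi_mem_nhds hu] with v hv
    simp only [keyholeContour, if_neg (by linarith [mem_Ioi.1 hv] : ¬ v ≤ -θ),
      if_neg (not_le.2 (mem_Ioi.1 hv))]
  rw [heq.deriv_eq]
  have hline : HasDerivAt (fun v : ℝ => (δ + (v - θ) : ℝ)) 1 u := by
    simpa using ((hasDerivAt_id u).sub_const θ).const_add δ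
  simpa using (hline.ofReal_comp.mul_const (exp (-(θ : ℂ) * I))).deriv

lemma norm_deriv_keyholeContour_le {δ θ u : ℝ} (hδ : 0 < δ) (hθ : 0 < θ) (hu : |u| ≠ θ) :
    ‖deriv (keyholeContour δ θ) u‖ ≤ max 1 δ := by
  rcases hu.lt_or_gt with h | h
  · rw [deriv_keyholeContour_of_abs_lt h, norm_mul, norm_neg, norm_I, one_mul,
      norm_keyholeContour hδ hθ, max_eq_left (by linarith), add_zero]
    exact le_max_right 1 δ
  rcases lt_abs.1 h with h' | h'
  · rw [deriv_keyholeContour_of_gt hθ.le h', ← ofReal_neg, norm_exp_ofReal_mul_I]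
    exact le_max_left 1 δ
  · rw [deriv_keyholeContour_of_lt_neg (by linarith), norm_neg, norm_exp_ofReal_mul_I]
    exact le_max_left 1 δ

lemma norm_cpow_keyholeContour_le {δ θ : ℝ} (hδ : 0 < δ) (hθ : 0 < θ) (hθπ : θ < Real.pi)
    (u : ℝ) {z : ℂ} (hz₁ : -1 ≤ z.re) (hz₀ : z.re ≤ 0) :
    ‖keyholeContour δ θ u ^ z‖ ≤ max 1 δ⁻¹ * Real.exp (θ * |z.im|) := by
  have hnorm : δ ≤ ‖keyholeContour δ θ u‖ := by
    rw [norm_keyholeContour hδ hθ]; exact le_add_of_nonneg_right (le_max_left _ _)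
  refine (norm_cpow_le_of_le_norm hδ hnorm (abs_arg_keyholeContour hδ hθ hθπ u).1 hz₀).trans ?_
  gcongr
  exact rpow_le_max_one_inv hδ hz₁ hz₀

lemma norm_apply_ofReal_mul_keyholeContour_le {μ δ θ k C : ℝ} {b : ℝ → ℂ → ℂ}
    (hbd : ∀ τ : ℝ, ∀ lam ∈ keyhole δ θ,
      ‖b τ lam‖ ≤ C * (1 + τ ^ 2 + ‖lam‖ ^ (2 / μ)) ^ ((-μ - 1 - k) / 2))
    (hμ : 0 < μ) (hδ : 0 < δ) (hθ : 0 < θ) (hθπ : θ < Real.pi)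
    (hk : 0 ≤ k) (hC : 0 ≤ C) (τ : ℝ) {c : ℝ} (hc : 0 < c) (hc1 : c ≤ 1) (u : ℝ) :
    ‖b τ (c * keyholeContour δ θ u)‖ ≤
      C * ((1 + τ ^ 2) ^ (-k / 2) * (max 1 |c * (δ / (δ + θ)) * u|) ^ (-(1 + 1 / μ))) := by
  set lam := (c : ℂ) * keyholeContour δ θ u
  have hscaled : |c * (δ / (δ + θ)) * u| ≤ ‖lam‖ := by
    rw [norm_mul, norm_real, Real.norm_of_nonneg hc.le, abs_mul, abs_of_pos (by positivity),
      mul_assoc]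
    exact mul_le_mul_of_nonneg_left (mul_abs_le_norm_keyholeContour hδ hθ u) hc.le
  have hp : -(1 + 1 / μ) ≤ 0 := by have := one_div_pos.2 hμ; linarith
  calc ‖b τ lam‖
      ≤ C * (1 + τ ^ 2 + ‖lam‖ ^ (2 / μ)) ^ ((-μ - 1 - k) / 2) :=
        hbd τ lam (ofReal_mul_keyholeContour_mem_keyhole hδ hθ hθπ hc hc1 u)
    _ ≤ C * ((1 + τ ^ 2) ^ (-k / 2) * (max 1 ‖lam‖) ^ (-(1 + 1 / μ))) := by
        gcongr; exact rpow_one_add_sq_add_le hμ hk τ (norm_nonneg lam)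
    _ ≤ C * ((1 + τ ^ 2) ^ (-k / 2) * (max 1 |c * (δ / (δ + θ)) * u|) ^ (-(1 + 1 / μ))) := by
        refine mul_le_mul_of_nonneg_left (mul_le_mul_of_nonneg_left ?_ (by positivity)) hC
        exact Real.rpow_le_rpow_of_nonpos (lt_max_of_lt_left one_pos)
          (max_le_max_left 1 hscaled) hp

theorem lower_order_symbol_estimate_general (μ δ θ k C : ℝ) (hμ : 0 < μ) (hδ : 0 < δ)
    (hθ1 : 0 < θ) (hθ2 : θ < Real.pi) (hk : 0 ≤ k) (hC : 0 ≤ C)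
    (b : ℝ → ℂ → ℂ)
    (hbd : ∀ (τ : ℝ), ∀ lam ∈ keyhole δ θ,
      ‖b τ lam‖ ≤
        C * (1 + τ^2 + ‖lam‖ ^ (2/μ)) ^ ((-μ - 1 - k)/2)) :
    ∃ C' : ℝ, 0 ≤ C' ∧ ∀ (t τ : ℝ) (z : ℂ), 0 < t → t ≤ 1 → -1 ≤ z.re → z.re < 0 →
      ‖((t ^ μ : ℝ) : ℂ) *
          ∫ u : ℝ, (keyholeContour δ θ u) ^ z * deriv (keyholeContour δ θ) u *
            b τ (((t ^ μ : ℝ) : ℂ) * keyholeContour δ θ u)‖ ≤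
        C' * Real.exp (θ * |z.im|) * (1 + τ^2) ^ (-k/2) := by
  set κ := δ / (δ + θ)
  set φ : ℝ → ℝ := fun y => (max 1 |y|) ^ (-(1 + 1 / μ))
  have hφ : Integrable φ := integrable_max_one_abs_rpow_neg (by simpa using hμ)
  have hφ₀ : 0 ≤ ∫ y, φ y := integral_nonneg fun y => Real.rpow_nonneg (by positivity) _
  refine ⟨C * max 1 δ⁻¹ * max 1 δ * κ⁻¹ * ∫ y, φ y, by positivity, ?_⟩
  intro t τ z ht ht1 hz₁ hz₀
  have htμ : 0 < t ^ μ := Real.rpow_pos_of_pos ht μ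
  set K := max 1 δ⁻¹ * Real.exp (θ * |z.im|) * max 1 δ * (C * (1 + τ ^ 2) ^ (-k / 2))
  have hintegrand : ∀ᵐ u : ℝ, ‖(keyholeContour δ θ u) ^ z * deriv (keyholeContour δ θ) u *
      b τ (((t ^ μ : ℝ) : ℂ) * keyholeContour δ θ u)‖ ≤ K * φ (t ^ μ * κ * u) := by
    filter_upwards [ae_abs_ne θ] with u hu
    rw [norm_mul, norm_mul]
    calc _ ≤ max 1 δ⁻¹ * Real.exp (θ * |z.im|) * max 1 δ *
          (C * ((1 + τ ^ 2) ^ (-k / 2) * φ (t ^ μ * κ * u))) := by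
          gcongr
          · exact norm_cpow_keyholeContour_le hδ hθ1 hθ2 u hz₁ hz₀.le
          · exact norm_deriv_keyholeContour_le hδ hθ1 hu
          · exact norm_apply_ofReal_mul_keyholeContour_le hbd hμ hδ hθ1 hθ2 hk hC τ htμ
              (Real.rpow_le_one ht.le ht1 hμ.le) u
      _ = K * φ (t ^ μ * κ * u) := by ring
  rw [norm_mul, norm_real, Real.norm_of_nonneg htμ.le]
  calc t ^ μ * ‖∫ u, _‖ ≤ t ^ μ * (K * (t ^ μ * κ)⁻¹ * ∫ y, φ y) :=
        mul_le_mul_of_nonneg_left (norm_integral_le_of_le_comp_mul hφ (by positivity)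
          hintegrand) htμ.le
    _ = _ := by simp only [K]; field_simp

/-- Suppose `b̃(τ,λ)` is continuous on `ℝ × Λ(δ,θ)` with
`|b̃(τ,λ)| ≤ C (1 + τ² + |λ|^{2/μ})^{(-μ-1-k)/2}`. For `Re z < 0` and `0 < t ≤ 1` set
`b_z(t,τ) = t^μ ∫_𝒞 λ^z b̃(τ, t^μ λ) dλ`. Then
`|b_z(t,τ)| ≤ C' e^{θ|Im z|}(1+τ²)^{-k/2}` uniformly for `0 < t ≤ 1`, `τ ∈ ℝ`,
`-1 ≤ Re z < 0`. -/
theorem lower_order_symbol_estimate (μ δ θ k C : ℝ) (hμ : 0 < μ) (hδ : 0 < δ)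
    (hθ1 : 0 < θ) (hθ2 : θ < Real.pi) (hk : 0 ≤ k) (hC : 0 ≤ C)
    (b : ℝ → ℂ → ℂ)
    (hcont : ContinuousOn (fun p : ℝ × ℂ => b p.1 p.2) (univ ×ˢ keyhole δ θ))
    (hbd : ∀ (τ : ℝ), ∀ lam ∈ keyhole δ θ,
      ‖b τ lam‖ ≤
        C * (1 + τ^2 + ‖lam‖ ^ (2/μ)) ^ ((-μ - 1 - k)/2)) :
    ∃ C' : ℝ, 0 ≤ C' ∧ ∀ (t τ : ℝ) (z : ℂ), 0 < t → t ≤ 1 → -1 ≤ z.re → z.re < 0 →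
      ‖((t ^ μ : ℝ) : ℂ) *
          ∫ u : ℝ, (keyholeContour δ θ u) ^ z * deriv (keyholeContour δ θ) u *
            b τ (((t ^ μ : ℝ) : ℂ) * keyholeContour δ θ u)‖ ≤
        C' * Real.exp (θ * |z.im|) * (1 + τ^2) ^ (-k/2) :=
  lower_order_symbol_estimate_general μ δ θ k C hμ hδ hθ1 hθ2 hk hC b hbd
end
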